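/- Let (μ : M → P) be a crossed module and let ι : P → Q be a surjective group homomorphism with kernel K. Let [M,K] denote the subgroup of M generated by the elements m⁻¹(m^k) for m ∈ M, k ∈ K. Then: [M,K] is a normal subgroup of M invariant under the P-action; the composite ι ∘ μ vanishes on [M,K] and so induces a homomorphism ∂ : M/[M,K] → Q; the P-action descends to a well-defined Q-action on M/[M,K] in which q ∈ Q acts via any p ∈ P with ι(p) = q; (∂ : M/[M,K] → Q) with this action is a crossed module; and together with the quotient morphism j : M → M/[M,K] it is an induced crossed module of (μ : M → P) along ι. In particular ι_*M ≅ M/[M,K]. -/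

import Mathlib

universe u

/-- A crossed module `(μ : M → P)`: groups `M`, `P`, a (right) action of `P` on `M` by
group automorphisms, written `act m p` for `m ^ p`, and a homomorphism `μ : M →* P`
satisfying CM1: `μ (m ^ p) = p⁻¹ * μ m * p` and CM2: `n ^ (μ m) = m⁻¹ * n * m`. -/
structure CrossedModule (M P : Type u) [Group M] [Group P] where
  μ : M →* P
  act : M → P → M
  act_mul : ∀ m n p, act (m * n) p = act m p * act n p
  act_one : ∀ m, act m 1 = m
  act_act : ∀ m p q, act (act m p) q = act m (p * q)
  cm1 : ∀ m p, μ (act m p) = p⁻¹ * μ m * p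
  cm2 : ∀ m n, act n (μ m) = m⁻¹ * n * m

/-- A morphism of crossed modules `(f, g) : (μ : M → P) → (ν : N → Q)`:
group homomorphisms `f : M → N`, `g : P → Q` with `ν ∘ f = g ∘ μ` and
`f (m ^ p) = (f m) ^ (g p)`. -/
def CrossedModule.IsMorphism {M P N Q : Type u} [Group M] [Group P] [Group N] [Group Q]
    (X : CrossedModule M P) (Y : CrossedModule N Q) (f : M →* N) (g : P →* Q) : Prop :=
  (∀ m, Y.μ (f m) = g (X.μ m)) ∧ ∀ m p, f (X.act m p) = Y.act (f m) (g p)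

/-- `(∂ : I → Q)` together with `j : M → I` is an induced crossed module of `(μ : M → P)`
along `ι : P → Q`: `(j, ι)` is a morphism of crossed modules, and for every crossed module
`(ν : N → Q)` and morphism `(f, ι) : (μ : M → P) → (ν : N → Q)` there is a unique group
homomorphism `φ : I → N` with `ν ∘ φ = ∂`, `φ (x ^ q) = (φ x) ^ q`, and `φ ∘ j = f`. -/
def IsInducedCrossedModule {M P Q I : Type u} [Group M] [Group P] [Group Q] [Group I]
    (X : CrossedModule M P) (ι : P →* Q) (Y : CrossedModule I Q) (j : M →* I) : Prop :=
  CrossedModule.IsMorphism X Y j ι ∧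
  ∀ (N : Type u) [Group N] (Z : CrossedModule N Q) (f : M →* N),
    CrossedModule.IsMorphism X Z f ι →
    ∃! φ : I →* N, (∀ x, Z.μ (φ x) = Y.μ x) ∧
      (∀ x q, φ (Y.act x q) = Z.act (φ x) q) ∧ ∀ m, φ (j m) = f m

/-!
Every generator `m⁻¹ * m ^ k` of `[M,K]` is killed by `ι ∘ μ` (CM1) and by the first component
`f` of any morphism `(f, ι)`, since `f (m ^ k) = (f m) ^ (ι k) = f m`. Conjugation and the
`P`-action permute the generators up to products (`K` is normal), so `[M,K]` is normal and
`P`-stable. On `M/[M,K]` the elements `m ^ p` and `m ^ p'` agree whenever `ι p = ι p'`, so `Q`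
acts through any lift along the surjection `ι`, and the crossed module axioms descend from `M`.
Universality is then the universal property of the quotient group.
-/

namespace CrossedModule

variable {M P : Type u} [Group M] [Group P] (X : CrossedModule M P)

def actHom (p : P) : M →* M where
  toFun m := X.act m p
  map_one' := mul_eq_right.mp
    (show X.act 1 p * X.act 1 p = X.act 1 p by rw [← X.act_mul, one_mul])
  map_mul' m n := X.act_mul m n p

@[simp]
lemma actHom_apply (m : M) (p : P) : X.actHom p m = X.act m p := rfl

/-- The subgroup `[M,K]`. -/
def actCommutator (K : Subgroup P) : Subgroup M :=
  Subgroup.closure {x | ∃ (m : M) (k : P), k ∈ K ∧ x = m⁻¹ * X.act m k}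

variable {K : Subgroup P}

lemma inv_mul_act_mem_actCommutator (m : M) {k : P} (hk : k ∈ K) :
    m⁻¹ * X.act m k ∈ X.actCommutator K :=
  Subgroup.subset_closure ⟨m, k, hk, rfl⟩

variable {X}

lemma actCommutator_le_comap {φ : M →* M}
    (h : ∀ (m : M), ∀ k ∈ K, φ (m⁻¹ * X.act m k) ∈ X.actCommutator K) :
    X.actCommutator K ≤ (X.actCommutator K).comap φ :=
  (Subgroup.closure_le _).2 fun _ ⟨m, k, hk, hx⟩ => hx ▸ h m k hk

lemma actCommutator_le_ker {N : Type*} [Group N] {f : M →* N}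
    (h : ∀ (m : M), ∀ k ∈ K, f (X.act m k) = f m) : X.actCommutator K ≤ f.ker :=
  (Subgroup.closure_le _).2 fun _ ⟨m, k, hk, hx⟩ => by
    simp [hx, MonoidHom.mem_ker, h m k hk]

instance actCommutator_normal : (X.actCommutator K).Normal where
  conj_mem n hn g := actCommutator_le_comap (φ := (MulAut.conj g).toMonoidHom) (fun m k hk => by
    have key : g * (m⁻¹ * X.act m k) * g⁻¹
        = ((m * g⁻¹)⁻¹ * X.act (m * g⁻¹) k) * ((g⁻¹)⁻¹ * X.act g⁻¹ k)⁻¹ := by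
      rw [X.act_mul]; group
    show g * (m⁻¹ * X.act m k) * g⁻¹ ∈ _
    rw [key]
    exact mul_mem (X.inv_mul_act_mem_actCommutator _ hk)
      (inv_mem (X.inv_mul_act_mem_actCommutator _ hk))) hn

lemma act_mem_actCommutator [K.Normal] {m : M} (hm : m ∈ X.actCommutator K) (p : P) :
    X.act m p ∈ X.actCommutator K :=
  actCommutator_le_comap (φ := X.actHom p) (fun m k hk => by
    have key : X.actHom p (m⁻¹ * X.act m k)
        = (X.act m p)⁻¹ * X.act (X.act m p) (p⁻¹ * k * p) := by
      rw [map_mul, map_inv, actHom_apply, actHom_apply, X.act_act, X.act_act]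
      group
    rw [key]
    exact X.inv_mul_act_mem_actCommutator (X.act m p) (Subgroup.Normal.conj_mem' ‹_› k hk p)) hm

lemma mk_act_eq_mk_act (m : M) {p p' : P} (h : p⁻¹ * p' ∈ K) :
    (X.act m p : M ⧸ X.actCommutator K) = X.act m p' := by
  rw [QuotientGroup.eq]
  simpa [X.act_act] using X.inv_mul_act_mem_actCommutator (X.act m p) h

variable {Q : Type u} [Group Q] {ι : P →* Q}

lemma actCommutator_ker_le_ker_comp_μ : X.actCommutator ι.ker ≤ (ι.comp X.μ).ker :=
  actCommutator_le_ker fun m k hk => by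
    rw [MonoidHom.mem_ker] at hk
    simp [X.cm1, hk]

lemma actCommutator_ker_le_ker_of_isMorphism {N : Type u} [Group N] {Z : CrossedModule N Q}
    {f : M →* N} (hf : X.IsMorphism Z f ι) : X.actCommutator ι.ker ≤ f.ker :=
  actCommutator_le_ker fun m k hk => by
    rw [MonoidHom.mem_ker] at hk
    rw [hf.2, hk, Z.act_one]

variable (X)

/-- `q` acts through an arbitrarily chosen preimage under `ι`; by `inducedActHom_mk` the choice
does not matter. -/
noncomputable def inducedActHom (hι : Function.Surjective ι) (q : Q) :
    M ⧸ X.actCommutator ι.ker →* M ⧸ X.actCommutator ι.ker :=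
  QuotientGroup.map _ _ (X.actHom (Function.surjInv hι q)) fun _ hm => act_mem_actCommutator hm _

variable {X}

lemma inducedActHom_mk (hι : Function.Surjective ι) (m : M) (p : P) :
    X.inducedActHom hι (ι p) m = (X.act m p : M ⧸ X.actCommutator ι.ker) :=
  mk_act_eq_mk_act m (by simp [MonoidHom.mem_ker, Function.surjInv_eq hι])

variable (X)

noncomputable def inducedOfSurjective (hι : Function.Surjective ι) :
    CrossedModule (M ⧸ X.actCommutator ι.ker) Q where
  μ := QuotientGroup.lift _ (ι.comp X.μ) actCommutator_ker_le_ker_comp_μ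
  act x q := X.inducedActHom hι q x
  act_mul x y q := map_mul _ x y
  act_one x := by
    induction x using QuotientGroup.induction_on with | H m =>
    rw [← map_one ι, inducedActHom_mk, X.act_one]
  act_act x q q' := by
    obtain ⟨p, rfl⟩ := hι q
    obtain ⟨p', rfl⟩ := hι q'
    induction x using QuotientGroup.induction_on with | H m =>
    rw [inducedActHom_mk, inducedActHom_mk, ← map_mul, inducedActHom_mk, X.act_act]
  cm1 x q := by
    obtain ⟨p, rfl⟩ := hι q
    induction x using QuotientGroup.induction_on with | H m =>
    simp [inducedActHom_mk, X.cm1]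
  cm2 x y := by
    induction x using QuotientGroup.induction_on with | H m =>
    induction y using QuotientGroup.induction_on with | H n =>
    simp [inducedActHom_mk, X.cm2]

variable {X}

@[simp]
lemma inducedOfSurjective_μ_mk (hι : Function.Surjective ι) (m : M) :
    (X.inducedOfSurjective hι).μ m = ι (X.μ m) := rfl

@[simp]
lemma inducedOfSurjective_act_mk (hι : Function.Surjective ι) (m : M) (p : P) :
    (X.inducedOfSurjective hι).act m (ι p) = (X.act m p : M ⧸ X.actCommutator ι.ker) :=
  inducedActHom_mk hι m p

lemma isInducedCrossedModule_inducedOfSurjective (hι : Function.Surjective ι) :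
    IsInducedCrossedModule X ι (X.inducedOfSurjective hι) (QuotientGroup.mk' _) := by
  refine ⟨⟨fun m => rfl, fun m p => (inducedOfSurjective_act_mk hι m p).symm⟩, ?_⟩
  intro N _ Z f hf
  refine ⟨QuotientGroup.lift _ f (actCommutator_ker_le_ker_of_isMorphism hf), ⟨?_, ?_, ?_⟩, ?_⟩
  · intro x
    induction x using QuotientGroup.induction_on with | H m =>
    exact hf.1 m
  · intro x q
    obtain ⟨p, rfl⟩ := hι q
    induction x using QuotientGroup.induction_on with | H m =>
    rw [inducedOfSurjective_act_mk]
    exact hf.2 m p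
  · intro m
    rfl
  · rintro ψ ⟨-, -, hψ⟩
    exact QuotientGroup.monoidHom_ext _ (MonoidHom.ext hψ)

end CrossedModule

open CrossedModule in
/-- Let `(μ : M → P)` be a crossed module, `ι : P → Q` a surjective homomorphism with kernel
`K`, and `[M,K]` the subgroup of `M` generated by the `m⁻¹ * (m ^ k)`, `m ∈ M`, `k ∈ K`.
Then `[M,K]` is normal in `M` and invariant under the `P`-action; `ι ∘ μ` vanishes on `[M,K]`
and so induces `∂ : M/[M,K] → Q`; the `P`-action descends to a `Q`-action on `M/[M,K]` in
which `q = ι p` acts via `p`; the result is a crossed module; and together with the quotient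
map `j : M → M/[M,K]` it is an induced crossed module of `(μ : M → P)` along `ι`.
In particular `ι_* M ≅ M/[M,K]`. -/
theorem induced_of_surjective {M P Q : Type u} [Group M] [Group P] [Group Q]
    (X : CrossedModule M P) (ι : P →* Q) (hι : Function.Surjective ι)
    (T : Subgroup M)
    (hT : T = Subgroup.closure {x | ∃ (m : M) (k : P), k ∈ ι.ker ∧ x = m⁻¹ * X.act m k}) :
    T.Normal ∧
    (∀ p : P, ∀ m ∈ T, X.act m p ∈ T) ∧
    (∀ m ∈ T, ι (X.μ m) = 1) ∧
    ∀ hN : T.Normal,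
      letI := hN
      ∃ Y : CrossedModule (M ⧸ T) Q,
        (∀ m : M, Y.μ (QuotientGroup.mk m) = ι (X.μ m)) ∧
        (∀ (m : M) (p : P),
          Y.act (QuotientGroup.mk m) (ι p) = QuotientGroup.mk (X.act m p)) ∧
        IsInducedCrossedModule X ι Y (QuotientGroup.mk' T) := by
  change T = X.actCommutator ι.ker at hT
  subst hT
  exact ⟨inferInstance, fun p _ hm => act_mem_actCommutator hm p,
    fun _ hm => actCommutator_ker_le_ker_comp_μ hm, fun _ =>
    ⟨X.inducedOfSurjective hι, inducedOfSurjective_μ_mk hι, inducedOfSurjective_act_mk hι,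
      isInducedCrossedModule_inducedOfSurjective hι⟩⟩
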